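/- arXiv:math-ph/0610049 — 2 statements merged into one kernel-verified Lean document; each statement's English description precedes it below -/
import Mathlib

section
/- Laguerre limit of the Selberg integral at γ = 1, α = 1/2: ∫_{ℝ^m} Π_{1≤i<j≤m}(xⱼ² − xᵢ²)² · Π_k e^{−x_k²} dx₁…dx_m = m! · π^{m/2} · 2^{−m(m−1)} · Π_{j=1}^{m−1}(2j)!. -/
/-!
Write `V(x) = det (x_j ^ (2 i))`, the Vandermonde determinant in the squares `x_j ^ 2`, so that
the integrand is `V(x) ^ 2 ∏ e^(-x_k ^ 2)`. Expanding both factors over permutations and integrating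
coordinatewise (Andréief's identity) gives `m!` times the Hankel determinant of the Gaussian moments
`∫ y ^ (2 n) e^(-y ^ 2) = Γ(n + 1/2) = √π (1/2)_n`. Hankel determinants of Pochhammer symbols
`(a)_(i+j)` reduce by row operations to `n! a ^ n` times the one of `(a + 1)_(i+j)`, whence
`det ((a)_(i+j)) = ∏_k k! (a)_k`; at `a = 1/2` we have `k! (1/2)_k = (2k)! / 4 ^ k`.
-/

open Finset Polynomial Matrix MeasureTheory Real Equiv
open scoped Nat

section Hankel
variable {R : Type*} [CommRing R]

lemma ascPochhammer_succ_eval_left (n : ℕ) (a : R) :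
    (ascPochhammer R (n + 1)).eval a = a * (ascPochhammer R n).eval (a + 1) := by
  rw [ascPochhammer_succ_left, eval_mul, eval_X, eval_comp, eval_add, eval_X, eval_one]

lemma det_ascPochhammer_hankel_succ (n : ℕ) (a : R) :
    det (of fun i j : Fin (n + 1) => (ascPochhammer R (i + j)).eval a) =
      n ! * a ^ n * det (of fun i j : Fin n => (ascPochhammer R (i + j)).eval (a + 1)) := by
  let B : Matrix (Fin (n + 1)) (Fin (n + 1)) R := of fun i j =>
    Fin.cases ((ascPochhammer R j).eval a)
      (fun i : Fin n => (j : R) * (ascPochhammer R (i + j)).eval a) i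
  -- `(a)_(i+j+1) = (a + i) (a)_(i+j) + j (a)_(i+j)`: subtract `a + i` times each row from the next
  have hrows : det (of fun i j : Fin (n + 1) => (ascPochhammer R (i + j)).eval a) = det B :=
    det_eq_of_forall_row_eq_smul_add_pred (fun i => a + i) (fun j => by simp [B]) fun i j => by
      simp only [B, of_apply, Fin.cases_succ, Fin.val_succ, Fin.val_castSucc]
      rw [add_right_comm, ascPochhammer_succ_eval]
      push_cast
      ring
  have hcolumn : det B = det (B.submatrix Fin.succ Fin.succ) := by
    simp [det_succ_column_zero, Fin.sum_univ_succ, B]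
  have hminor : B.submatrix Fin.succ Fin.succ =
      of fun i j : Fin n => ((j : R) + 1) * a * (ascPochhammer R (i + j)).eval (a + 1) := by
    ext i j
    simp only [B, submatrix_apply, of_apply, Fin.cases_succ, Fin.val_succ, ← add_assoc,
      ascPochhammer_succ_eval_left]
    push_cast
    ring
  have hscale := det_mul_row (fun j : Fin n => ((j : R) + 1) * a)
    (of fun i j : Fin n => (ascPochhammer R (i + j)).eval (a + 1))
  simp only [of_apply] at hscale
  rw [hrows, hcolumn, hminor, hscale, prod_mul_distrib, prod_const, card_univ, Fintype.card_fin,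
    Fin.prod_univ_eq_prod_range (fun j => (j : R) + 1)]
  norm_cast
  rw [prod_range_add_one_eq_factorial]

theorem det_ascPochhammer_hankel (n : ℕ) (a : R) :
    det (of fun i j : Fin n => (ascPochhammer R (i + j)).eval a) =
      ∏ k ∈ range n, (k ! : R) * (ascPochhammer R k).eval a := by
  induction n generalizing a with
  | zero => simp
  | succ n ih =>
    rw [det_ascPochhammer_hankel_succ, ih, prod_range_succ']
    simp only [ascPochhammer_succ_eval_left, ascPochhammer_zero, eval_one, Nat.factorial_zero,
      Nat.cast_one, mul_one, Nat.factorial_succ, Nat.cast_mul, prod_mul_distrib, prod_const,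
      card_range]
    rw [← prod_range_add_one_eq_factorial]
    push_cast
    ring

end Hankel

section Andreief
variable {ι : Type*} [Fintype ι] [DecidableEq ι]

theorem Matrix.sum_sign_mul_sign_mul_prod_eq_factorial_mul_det {R : Type*} [CommRing R]
    (G : Matrix ι ι R) :
    ∑ σ : Perm ι, ∑ τ : Perm ι,
        ((Perm.sign σ : ℤ) : R) * (Perm.sign τ : ℤ) * ∏ i, G (σ i) (τ i) =
      (Fintype.card ι)! * det G := by
  have hinner (σ : Perm ι) :
      ∑ τ : Perm ι, ((Perm.sign σ : ℤ) : R) * (Perm.sign τ : ℤ) * ∏ i, G (σ i) (τ i) =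
        det G := by
    rw [← det_transpose, det_apply']
    refine Fintype.sum_equiv (Equiv.mulRight σ⁻¹) _ _ fun τ => ?_
    rw [Equiv.coe_mulRight, Perm.sign_mul, Perm.sign_inv,
      ← Equiv.prod_comp σ fun k => Gᵀ ((τ * σ⁻¹) k) k]
    simp only [Perm.mul_apply, transpose_apply, Perm.inv_def, symm_apply_apply, Units.val_mul,
      Int.cast_mul]
    ring
  simp only [hinner, sum_const, card_univ, Fintype.card_perm, nsmul_eq_mul]

theorem integral_det_mul_det {α : Type*} [MeasurableSpace α] (μ : Measure α) [SigmaFinite μ]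
    (f g : ι → α → ℝ) (hfg : ∀ i j, Integrable (fun y => f i y * g j y) μ) :
    ∫ x : ι → α, det (of fun i j => f i (x j)) * det (of fun i j => g i (x j))
        ∂Measure.pi (fun _ => μ) =
      ((Fintype.card ι)! : ℝ) * det (of fun i j => ∫ y, f i y * g j y ∂μ) := by
  have hterm (σ τ : Perm ι) (x : ι → α) :
      (((Perm.sign σ : ℤ) : ℝ) * ∏ j, f (σ j) (x j)) *
          (((Perm.sign τ : ℤ) : ℝ) * ∏ j, g (τ j) (x j)) =
        ((Perm.sign σ : ℤ) : ℝ) * (Perm.sign τ : ℤ) * ∏ j, f (σ j) (x j) * g (τ j) (x j) := by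
    rw [prod_mul_distrib]; ring
  have hintegral (σ τ : Perm ι) :
      ∫ x : ι → α,
          ((Perm.sign σ : ℤ) : ℝ) * (Perm.sign τ : ℤ) * ∏ j, f (σ j) (x j) * g (τ j) (x j)
          ∂Measure.pi (fun _ => μ) =
        ((Perm.sign σ : ℤ) : ℝ) * (Perm.sign τ : ℤ) * ∏ j, ∫ y, f (σ j) y * g (τ j) y ∂μ := by
    rw [integral_const_mul, integral_fintype_prod_eq_prod (fun j y => f (σ j) y * g (τ j) y)]
  have hintegrable (σ τ : Perm ι) : Integrable (fun x : ι → α =>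
      ((Perm.sign σ : ℤ) : ℝ) * (Perm.sign τ : ℤ) * ∏ j, f (σ j) (x j) * g (τ j) (x j))
      (Measure.pi fun _ => μ) :=
    (Integrable.fintype_prod fun j => hfg (σ j) (τ j)).const_mul _
  simp only [det_apply', of_apply, sum_mul_sum, hterm]
  rw [integral_finsetSum _ fun σ _ => integrable_finsetSum _ fun τ _ => hintegrable σ τ]
  simp only [integral_finsetSum _ fun τ _ => hintegrable _ τ, hintegral]
  simpa only [det_apply', of_apply] using
    sum_sign_mul_sign_mul_prod_eq_factorial_mul_det (of fun i j => ∫ y, f i y * g j y ∂μ)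

end Andreief

lemma Real.Gamma_add_nat_eq_mul_ascPochhammer {s : ℝ} (hs : ∀ k : ℕ, s ≠ -k) (n : ℕ) :
    Gamma (s + n) = Gamma s * (ascPochhammer ℝ n).eval s := by
  induction n with
  | zero => simp
  | succ n ih =>
    have hsn : s + n ≠ 0 := fun h => hs n (by linarith)
    rw [Nat.cast_succ, ← add_assoc, Gamma_add_one hsn, ih, ascPochhammer_succ_eval]
    ring

lemma integrable_pow_mul_exp_neg_sq (n : ℕ) : Integrable fun x : ℝ => x ^ n * exp (-x ^ 2) := by
  simpa [rpow_natCast] using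
    integrable_rpow_mul_exp_neg_mul_sq (b := 1) one_pos (s := n)
      (by linarith [n.cast_nonneg (α := ℝ)])

lemma integral_pow_two_mul_mul_exp_neg_sq (n : ℕ) :
    ∫ x : ℝ, x ^ (2 * n) * exp (-x ^ 2) = √π * (ascPochhammer ℝ n).eval (1 / 2) := by
  have hhalf := integral_rpow_mul_exp_neg_mul_rpow (p := 2) (q := ((2 * n : ℕ) : ℝ)) (b := 1)
    two_pos (by linarith [(2 * n).cast_nonneg (α := ℝ)]) one_pos
  simp only [rpow_natCast, rpow_two, neg_mul, one_mul, one_rpow] at hhalf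
  have hGamma : Gamma ((((2 * n : ℕ) : ℝ) + 1) / 2) = Gamma (1 / 2 + n) := by
    push_cast; ring_nf
  calc ∫ x : ℝ, x ^ (2 * n) * exp (-x ^ 2)
      = ∫ x : ℝ, |x| ^ (2 * n) * exp (-|x| ^ 2) := by simp only [pow_mul, sq_abs]
    _ = 2 * ∫ x in Set.Ioi 0, x ^ (2 * n) * exp (-x ^ 2) :=
      integral_comp_abs (f := fun y => y ^ (2 * n) * exp (-y ^ 2))
    _ = Gamma (1 / 2 + n) := by rw [hhalf, hGamma]; ring
    _ = √π * (ascPochhammer ℝ n).eval (1 / 2) := by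
      rw [Gamma_add_nat_eq_mul_ascPochhammer, Gamma_one_half_eq]
      intro k
      linarith [k.cast_nonneg (α := ℝ)]

lemma four_pow_mul_factorial_mul_ascPochhammer_half (k : ℕ) :
    4 ^ k * k ! * (ascPochhammer ℝ k).eval (1 / 2) = (2 * k)! := by
  induction k with
  | zero => simp
  | succ k ih =>
    rw [ascPochhammer_succ_eval, Nat.factorial_succ, show 2 * (k + 1) = 2 * k + 1 + 1 by ring,
      Nat.factorial_succ, Nat.factorial_succ]
    push_cast
    rw [← ih]
    ring

lemma prod_factorial_mul_ascPochhammer_half (m : ℕ) :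
    ∏ k ∈ range m, (k ! : ℝ) * (ascPochhammer ℝ k).eval (1 / 2) =
      (∏ j ∈ Icc 1 (m - 1), ((2 * j)! : ℝ)) / 2 ^ (m * (m - 1)) := by
  have hterm (k : ℕ) : (k ! : ℝ) * (ascPochhammer ℝ k).eval (1 / 2) = (2 * k)! / 4 ^ k := by
    rw [← four_pow_mul_factorial_mul_ascPochhammer_half]; field_simp
  have hfactorials : ∏ k ∈ range m, ((2 * k)! : ℝ) = ∏ j ∈ Icc 1 (m - 1), ((2 * j)! : ℝ) := by
    rcases m.eq_zero_or_pos with rfl | hm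
    · simp
    · have hrange : range m = insert 0 (Icc 1 (m - 1)) := by
        ext k; simp only [mem_range, mem_insert, mem_Icc]; omega
      rw [hrange, prod_insert (by simp)]
      simp
  have hpowers : ∏ k ∈ range m, (4 : ℝ) ^ k = 2 ^ (m * (m - 1)) := by
    rw [prod_pow_eq_pow_sum, show (4 : ℝ) = 2 ^ 2 by norm_num, ← pow_mul, mul_comm,
      sum_range_id_mul_two]
  simp only [hterm, prod_div_distrib, hfactorials, hpowers]

lemma det_pow_sq_mul_det_pow_sq_mul_exp {m : ℕ} (x : Fin m → ℝ) :
    det (of fun i j : Fin m => (x j ^ 2) ^ (i : ℕ)) *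
        det (of fun i j : Fin m => (x j ^ 2) ^ (i : ℕ) * exp (-x j ^ 2)) =
      (∏ i : Fin m, ∏ j ∈ Ioi i, (x j ^ 2 - x i ^ 2) ^ 2) * ∏ k : Fin m, exp (-x k ^ 2) := by
  have hvdm : det (of fun i j : Fin m => (x j ^ 2) ^ (i : ℕ)) =
      ∏ i : Fin m, ∏ j ∈ Ioi i, (x j ^ 2 - x i ^ 2) := by
    rw [← det_vandermonde, ← det_transpose]; rfl
  have hweight :=
    det_mul_row (fun j => exp (-x j ^ 2)) (of fun i j : Fin m => (x j ^ 2) ^ (i : ℕ))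
  simp only [of_apply] at hweight
  simp only [mul_comm _ (exp _), hweight, hvdm, prod_pow]
  ring

/-- Laguerre limit of the Selberg integral with `γ = 1`, `α = 1/2`:
`∫_{ℝ^m} Π_{i<j}(xⱼ² - xᵢ²)² Π_k e^{-x_k²} dx = m! π^{m/2} 2^{-m(m-1)} Π_{j=1}^{m-1}(2j)!`. -/
theorem selberg_laguerre_half (m : ℕ) :
    (∫ x : Fin m → ℝ,
        (∏ i : Fin m, ∏ j ∈ Finset.Ioi i, ((x j) ^ 2 - (x i) ^ 2) ^ 2) *
          ∏ k : Fin m, Real.exp (-(x k) ^ 2))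
      = (m.factorial : ℝ) * Real.sqrt Real.pi ^ m *
          (∏ j ∈ Finset.Icc 1 (m - 1), ((2 * j).factorial : ℝ)) / 2 ^ (m * (m - 1)) := by
  have hmoments : (of fun i j : Fin m =>
      ∫ y : ℝ, (y ^ 2) ^ (i : ℕ) * ((y ^ 2) ^ (j : ℕ) * exp (-y ^ 2))) =
        √π • of fun i j : Fin m => (ascPochhammer ℝ (i + j)).eval (1 / 2) := by
    ext i j
    rw [Matrix.smul_apply, of_apply, of_apply, smul_eq_mul,
      ← integral_pow_two_mul_mul_exp_neg_sq]
    simp only [← pow_mul, ← mul_assoc, ← pow_add, mul_add]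
  simp only [← det_pow_sq_mul_det_pow_sq_mul_exp]
  rw [volume_pi, integral_det_mul_det volume (fun (i : Fin m) y => (y ^ 2) ^ (i : ℕ))
      (fun j y => (y ^ 2) ^ (j : ℕ) * exp (-y ^ 2)) fun i j => by
        simpa only [← pow_mul, ← mul_assoc, ← pow_add, mul_add] using
          integrable_pow_mul_exp_neg_sq (2 * i + 2 * j),
    hmoments, det_smul, det_ascPochhammer_hankel, prod_factorial_mul_ascPochhammer_half,
    Fintype.card_fin]
  ring
end

section
/- There is a bijection between the symmetric group S_{2R} and the set of equivalence classes of tetrads (σ, τ, s, t) ∈ S_R × S_R × {±1}^R × {±1}^R, where two tetrads are equivalent if they agree up to simultaneously flipping all signs attached to the vertices of any single cycle of σ∘τ⁻¹. In particular, the number of such equivalence classes is (2R)!. -/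
/-- A tetrad `(σ, τ, s, t)`: two permutations of `{1,…,R}` and two sign vectors. -/
def Tetrad (R : ℕ) :=
  Equiv.Perm (Fin R) × Equiv.Perm (Fin R) × (Fin R → ℤˣ) × (Fin R → ℤˣ)

/-- Equivalence of tetrads: same permutations, and the signs agree up to a
global sign flip `ε` which is constant on each cycle of `σ∘τ⁻¹` (flipping
all `s`-signs of the black vertices and all `t`-signs of the white vertices of
that cycle; the white vertex `j` belongs to the cycle of the black vertex `τ⁻¹ j`). -/
def tetradRel (R : ℕ) (w w' : Tetrad R) : Prop :=
  w.1 = w'.1 ∧ w.2.1 = w'.2.1 ∧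
    ∃ ε : Fin R → ℤˣ,
      (∀ i, ε ((w.1 * w.2.1⁻¹) i) = ε i) ∧
      (∀ i, w'.2.2.1 i = ε i * w.2.2.1 i) ∧
      (∀ j, w'.2.2.2 j = ε (w.2.1⁻¹ j) * w.2.2.2 j)

/-!
With `u = s⁻¹ * (t ∘ τ)`, the class of a tetrad `(σ, τ, s, t)` is determined by `σ`, `τ`,
`u` and the coset of `s` modulo the subgroup `C(π)` of sign vectors constant on the cycles of
`π = σ τ⁻¹`. Hence there are `2 ^ R * R! * ∑ π, [(ℤˣ)^R : C(π)]` classes. Decomposing a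
permutation of `Fin (n + 1)` by the image of `0`, the index of `C(π)` equals the index for
the remaining permutation when `0` is a fixed point, and is twice it when `0` is inserted
into an existing cycle. So the sum over `S_(n+1)` is `2n + 1` times the sum over `S_n`, and
the count is `2 ^ R * R! * (2R - 1)‼ = (2R)!`.
-/

open Equiv Equiv.Perm

section ConstOnCycles

variable (M : Type*) [Group M] {α : Type*}

def constOnCycles (π : Perm α) : Subgroup (α → M) where
  carrier := {ε | ∀ i, ε (π i) = ε i}
  one_mem' _ := rfl
  mul_mem' ha hb i := by simp [ha i, hb i]
  inv_mem' ha i := by simp [ha i]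

variable {M}

theorem mem_constOnCycles {π : Perm α} {ε : α → M} :
    ε ∈ constOnCycles M π ↔ ∀ i, ε (π i) = ε i :=
  Iff.rfl

variable {n : ℕ} (e : Perm (Fin n))

theorem cons_mem_constOnCycles_decomposeFin_zero (a : M) (f : Fin n → M) :
    (Fin.cons a f : Fin (n + 1) → M) ∈ constOnCycles M (decomposeFin.symm (0, e)) ↔
      f ∈ constOnCycles M e := by
  simp only [mem_constOnCycles, Fin.forall_fin_succ, decomposeFin_symm_apply_zero,
    decomposeFin_symm_apply_succ, swap_self, refl_apply, Fin.cons_zero, Fin.cons_succ, true_and]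

theorem cons_mem_constOnCycles_decomposeFin_succ (j : Fin n) (a : M) (f : Fin n → M) :
    (Fin.cons a f : Fin (n + 1) → M) ∈ constOnCycles M (decomposeFin.symm (j.succ, e)) ↔
      f j = a ∧ f ∈ constOnCycles M e := by
  simp only [mem_constOnCycles, Fin.forall_fin_succ, decomposeFin_symm_apply_zero,
    decomposeFin_symm_apply_succ, Fin.cons_zero, Fin.cons_succ]
  refine and_congr_right fun hj => forall_congr' fun x => ?_
  by_cases hx : e x = j
  · rw [hx, swap_apply_right, Fin.cons_zero, hj]
  · rw [swap_apply_of_ne_of_ne (Fin.succ_ne_zero _) (Fin.succ_injective _ |>.ne hx), Fin.cons_succ]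

theorem card_constOnCycles_decomposeFin_zero :
    Nat.card (constOnCycles M (decomposeFin.symm (0, e))) =
      Nat.card M * Nat.card (constOnCycles M e) := by
  rw [← Nat.card_prod]
  refine Nat.card_congr
    { toFun ε := (ε.1 0, ⟨Fin.tail ε.1, (cons_mem_constOnCycles_decomposeFin_zero e _ _).1
        (by rw [Fin.cons_self_tail]; exact ε.2)⟩)
      invFun p := ⟨Fin.cons p.1 p.2, (cons_mem_constOnCycles_decomposeFin_zero e _ _).2 p.2.2⟩
      left_inv ε := by simp
      right_inv p := by simp }

theorem card_constOnCycles_decomposeFin_succ (j : Fin n) :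
    Nat.card (constOnCycles M (decomposeFin.symm (j.succ, e))) =
      Nat.card (constOnCycles M e) := by
  refine Nat.card_congr
    { toFun ε := ⟨Fin.tail ε.1, ((cons_mem_constOnCycles_decomposeFin_succ e j _ _).1
        (by rw [Fin.cons_self_tail]; exact ε.2)).2⟩
      invFun f := ⟨Fin.cons (f.1 j) f.1,
        (cons_mem_constOnCycles_decomposeFin_succ e j _ _).2 ⟨rfl, f.2⟩⟩
      left_inv ε := by
        obtain ⟨ε, hε⟩ := ε
        have h0 : ε j.succ = ε 0 := by
          simpa using mem_constOnCycles.1 hε 0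
        ext : 1
        change Fin.cons (ε j.succ) (Fin.tail ε) = ε
        rw [h0, Fin.cons_self_tail]
      right_inv f := by simp }

variable [Finite M]

theorem index_constOnCycles_decomposeFin_zero :
    (constOnCycles M (decomposeFin.symm (0, e))).index = (constOnCycles M e).index := by
  refine Nat.eq_of_mul_eq_mul_left
    (Nat.mul_pos (Nat.card_pos (α := M)) (Nat.card_pos (α := constOnCycles M e))) ?_
  have h := Subgroup.card_mul_index (constOnCycles M e)
  have h' := Subgroup.card_mul_index (constOnCycles M (decomposeFin.symm (0, e)))
  rw [card_constOnCycles_decomposeFin_zero] at h'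
  simp only [Nat.card_fun, Nat.card_fin] at h h'
  rw [h', mul_assoc, h, pow_succ']

theorem index_constOnCycles_decomposeFin_succ (j : Fin n) :
    (constOnCycles M (decomposeFin.symm (j.succ, e))).index =
      Nat.card M * (constOnCycles M e).index := by
  refine Nat.eq_of_mul_eq_mul_left (Nat.card_pos (α := constOnCycles M e)) ?_
  have h := Subgroup.card_mul_index (constOnCycles M e)
  have h' := Subgroup.card_mul_index (constOnCycles M (decomposeFin.symm (j.succ, e)))
  rw [card_constOnCycles_decomposeFin_succ] at h'
  simp only [Nat.card_fun, Nat.card_fin] at h h'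
  rw [h', mul_left_comm, h, pow_succ']

variable (M) in
theorem sum_index_constOnCycles_succ (n : ℕ) :
    ∑ π : Perm (Fin (n + 1)), (constOnCycles M π).index =
      (1 + n * Nat.card M) * ∑ π : Perm (Fin n), (constOnCycles M π).index := by
  rw [← decomposeFin.symm.sum_comp, Fintype.sum_prod_type, Fin.sum_univ_succ]
  simp only [index_constOnCycles_decomposeFin_zero, index_constOnCycles_decomposeFin_succ,
    ← Finset.mul_sum, Finset.sum_const, Finset.card_univ, Fintype.card_fin, smul_eq_mul]
  ring

end ConstOnCycles

open Nat in
theorem factorial_mul_two_pow_mul_sum_index_constOnCycles (n : ℕ) :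
    n ! * 2 ^ n * ∑ π : Perm (Fin n), (constOnCycles ℤˣ π).index = (2 * n)! := by
  induction n with
  | zero => simp [Subgroup.eq_top_iff', mem_constOnCycles]
  | succ n ih =>
    rw [sum_index_constOnCycles_succ, Nat.card_eq_fintype_card, Fintype.card_units_int,
      show 2 * (n + 1) = 2 * n + 1 + 1 by ring, factorial_succ (2 * n + 1),
      factorial_succ (2 * n), ← ih, factorial_succ n]
    ring

theorem Fintype.sum_prod_mul_inv {G β : Type*} [Group G] [Fintype G] [AddCommMonoid β]
    (f : G → β) : ∑ p : G × G, f (p.1 * p.2⁻¹) = Fintype.card G • ∑ g, f g := by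
  rw [Fintype.sum_prod_type, ← Finset.card_univ, ← Finset.sum_const]
  exact Finset.sum_congr rfl fun g _ => ((Equiv.inv G).trans (Equiv.mulLeft g)).sum_comp f

abbrev TetradInvariant (R : ℕ) :=
  Σ p : Perm (Fin R) × Perm (Fin R),
    ((Fin R → ℤˣ) ⧸ constOnCycles ℤˣ (p.1 * p.2⁻¹)) × (Fin R → ℤˣ)

def tetradInvariant {R : ℕ} (w : Tetrad R) : TetradInvariant R :=
  ⟨(w.1, w.2.1), (w.2.2.1, w.2.2.1⁻¹ * (w.2.2.2 ∘ w.2.1))⟩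

theorem tetradRel_iff_tetradInvariant_eq {R : ℕ} (w w' : Tetrad R) :
    tetradRel R w w' ↔ tetradInvariant w = tetradInvariant w' := by
  obtain ⟨σ, τ, s, t⟩ := w
  obtain ⟨σ', τ', s', t'⟩ := w'
  constructor
  · rintro ⟨rfl, rfl, ε, hε, hs, ht⟩
    dsimp only at hε hs ht
    obtain rfl : s' = ε * s := funext hs
    refine Sigma.ext rfl (heq_of_eq (Prod.ext ?_ (funext fun i => ?_)))
    · exact QuotientGroup.eq.2 (by rwa [mul_comm ε s, inv_mul_cancel_left])
    · simp only [tetradInvariant, Pi.mul_apply, Pi.inv_apply, Function.comp_apply, ht,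
        Perm.coe_inv, symm_apply_apply, mul_inv_rev, mul_assoc, inv_mul_cancel_left]
  · intro h
    obtain ⟨hp, hq⟩ := Sigma.mk.inj_iff.1 h
    obtain ⟨rfl, rfl⟩ := Prod.ext_iff.1 hp
    obtain ⟨hs, hu⟩ := Prod.ext_iff.1 (eq_of_heq hq)
    dsimp only at hs hu
    refine ⟨rfl, rfl, s⁻¹ * s', QuotientGroup.eq.1 hs, fun i => ?_, fun j => ?_⟩
    · rw [Pi.mul_apply, Pi.inv_apply, mul_right_comm, inv_mul_cancel, one_mul]
    · have hj := congrFun hu (τ⁻¹ j)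
      simp only [Pi.mul_apply, Pi.inv_apply, Function.comp_apply, Perm.coe_inv,
        apply_symm_apply] at hj
      show t' j = (s⁻¹ * s') (τ.symm j) * t j
      rw [inv_mul_eq_iff_eq_mul.1 hj.symm, Pi.mul_apply, Pi.inv_apply, mul_left_comm, mul_assoc]

theorem tetradInvariant_surjective (R : ℕ) : Function.Surjective (tetradInvariant (R := R)) := by
  rintro ⟨⟨σ, τ⟩, q, u⟩
  obtain ⟨s, rfl⟩ := QuotientGroup.mk_surjective q
  refine ⟨(σ, τ, s, (s * u) ∘ τ.symm),
    Sigma.ext rfl (heq_of_eq (Prod.ext rfl (funext fun i => ?_)))⟩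
  simp only [tetradInvariant, Pi.mul_apply, Pi.inv_apply, Function.comp_apply,
    symm_apply_apply, inv_mul_cancel_left]

noncomputable def quotTetradRelEquiv (R : ℕ) : Quot (tetradRel R) ≃ TetradInvariant R :=
  (Quot.congrRight tetradRel_iff_tetradInvariant_eq).trans
    (Setoid.quotientKerEquivOfSurjective _ (tetradInvariant_surjective R))

open Nat in
theorem card_quot_tetradRel (R : ℕ) : Nat.card (Quot (tetradRel R)) = (2 * R)! := by
  rw [Nat.card_congr (quotTetradRelEquiv R), Nat.card_sigma]
  simp only [Nat.card_prod, ← Subgroup.index_eq_card, ← Finset.sum_mul]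
  rw [Fintype.sum_prod_mul_inv (fun π => (constOnCycles ℤˣ π).index), smul_eq_mul,
    Fintype.card_perm, Fintype.card_fin, Nat.card_fun, Nat.card_fin, Nat.card_eq_fintype_card,
    Fintype.card_units_int, ← factorial_mul_two_pow_mul_sum_index_constOnCycles]
  ring

/-- There is a bijection between `S_{2R}` and the set of equivalence classes of
tetrads; in particular the number of equivalence classes is `(2R)!`. -/
theorem tetrad_classes_equiv_perm (R : ℕ) :
    Nonempty (Equiv.Perm (Fin (2 * R)) ≃ Quot (tetradRel R)) ∧
    Nat.card (Quot (tetradRel R)) = (2 * R).factorial := by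
  have : Finite (Quot (tetradRel R)) := Finite.of_equiv _ (quotTetradRelEquiv R).symm
  refine ⟨Finite.card_eq.1 ?_, card_quot_tetradRel R⟩
  rw [card_quot_tetradRel, Nat.card_perm, Nat.card_fin]
end
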